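/- Let I/J be an abelian chief factor of a skew left brace B. Then either I/J ⊆ Φ(B/J) (Frattini chief factor) or I/J has a complement in B/J (there is a subbrace T of B/J with (I/J)·T = I/J + T = B/J and (I/J) ∩ T = 0). If moreover B is finite, every complement of I/J is a maximal subbrace of B/J. -/

import Mathlib

/-!
For an ideal `I` and a subbrace `W`, the sets `I * W` and `I + W` coincide, so `I * W` is a
subbrace. If `I/J` is abelian, `J ⊆ W` and `I * W = B`, then `I ∩ W` is an ideal: write
`g = x * t = x' + t'` with `x, x' ∈ I` and `t, t' ∈ W`; the `W`-part preserves `I ∩ W`, and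
the `I`-part only moves an element of `I` inside its coset modulo `J ⊆ I ∩ W`. As `I/J` is
chief, `I ∩ W` is `J` or `I`.

A maximal subbrace `S ⊇ J` not containing `I` therefore satisfies `I * S = B` and
`I ∩ S = J`. Conversely, if `T` is a complement and `T ⊆ U`, then either `I ∩ U = J`, and
`U = T` by Dedekind's modular law, or `I ⊆ U`, and `U ⊇ I * T = B`.
-/

/-- A skew left brace: a set with two group structures `(B,+)` and `(B,·)`
satisfying `a * (b + c) = a * b - a + a * c`. -/
class SkewBrace (B : Type*) extends AddGroup B, Group B where
  mul_add_dist : ∀ a b c : B, a * (b + c) = a * b - a + a * c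

namespace SkewBraceDefs

variable {B : Type*} [SkewBrace B]

/-- The lambda map `λ_a(b) = -a + a * b`. -/
def lam (a b : B) : B := -a + a * b

/-- A subbrace: a subgroup of both group structures. -/
def IsSubbrace (S : Set B) : Prop :=
  (∃ A : AddSubgroup B, (A : Set B) = S) ∧ (∃ M : Subgroup B, (M : Set B) = S)

/-- An ideal: a left ideal that is normal in both groups. -/
def IsIdeal (I : Set B) : Prop :=
  (∃ A : AddSubgroup B, (A : Set B) = I ∧ A.Normal) ∧
  (∃ M : Subgroup B, (M : Set B) = I ∧ M.Normal) ∧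
  ∀ b : B, ∀ x ∈ I, lam b x ∈ I

/-- A maximal subbrace. -/
def IsMaximalSubbrace (S : Set B) : Prop :=
  IsSubbrace S ∧ S ≠ Set.univ ∧
    ∀ T : Set B, IsSubbrace T → S ⊆ T → T = S ∨ T = Set.univ

/-- The centre `ζ(B) = {a | a + b = b + a = a·b = b·a for all b}` of a skew brace. -/
def zeta (B : Type*) [SkewBrace B] : Set B :=
  {a : B | ∀ b : B, a + b = b + a ∧ a * b = a + b ∧ b * a = a + b}

/-- The commutator `[I,J]`: the smallest ideal containing additive commutators,
multiplicative commutators, and the elements `i * j - (i + j)`. -/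
def commIdeal (I J : Set B) : Set B :=
  ⋂₀ {K : Set B | IsIdeal K ∧ ∀ i ∈ I, ∀ j ∈ J,
      i + j - i - j ∈ K ∧ i * j * i⁻¹ * j⁻¹ ∈ K ∧ i * j - (i + j) ∈ K}

/-- The Frattini subbrace: intersection of all maximal subbraces
(`Set.univ` if there are none). -/
def Frattini (B : Type*) [SkewBrace B] : Set B :=
  ⋂₀ {S : Set B | IsMaximalSubbrace S}

/-- `I` is an ideal of the subbrace `S`. -/
def IsIdealOf (I S : Set B) : Prop :=
  I ⊆ S ∧ (0 : B) ∈ I ∧ (∀ x ∈ I, ∀ y ∈ I, x + y ∈ I) ∧ (∀ x ∈ I, -x ∈ I) ∧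
  (∀ x ∈ I, ∀ y ∈ I, x * y ∈ I) ∧ (∀ x ∈ I, x⁻¹ ∈ I) ∧
  (∀ s ∈ S, ∀ x ∈ I, s + x - s ∈ I) ∧ (∀ s ∈ S, ∀ x ∈ I, s * x * s⁻¹ ∈ I) ∧
  (∀ s ∈ S, ∀ x ∈ I, lam s x ∈ I)

/-- An abelian ideal series `B = I 0 ⊇ I 1 ⊇ ... ⊇ I n = 0`, each `I (i+1)` an
ideal of `I i` with abelian factor brace `I i / I (i+1)`. -/
def IsAbelianSeries (I : ℕ → Set B) (n : ℕ) : Prop :=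
  I 0 = Set.univ ∧ I n = {0} ∧
  ∀ i < n, IsIdealOf (I (i + 1)) (I i) ∧
    ∀ a ∈ I i, ∀ b ∈ I i,
      -(b + a) + (a + b) ∈ I (i + 1) ∧ -(a + b) + a * b ∈ I (i + 1)

/-- Solubility of a skew brace: existence of an abelian ideal series. -/
def IsSoluble (B : Type*) [SkewBrace B] : Prop :=
  ∃ n : ℕ, ∃ I : ℕ → Set B, IsAbelianSeries I n

/-- The derived series `∂_0(B) = B`, `∂_{n+1}(B) = [∂_n(B), ∂_n(B)]`. -/
def derivedSeries (B : Type*) [SkewBrace B] : ℕ → Set B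
  | 0 => Set.univ
  | n + 1 => commIdeal (derivedSeries B n) (derivedSeries B n)

end SkewBraceDefs

open SkewBraceDefs

open Set Pointwise

namespace SkewBraceDefs

variable {B : Type*} [SkewBrace B]

theorem mul_zero_eq_self (a : B) : a * 0 = a := by
  have h := SkewBrace.mul_add_dist a 0 0
  rw [add_zero, sub_eq_add_neg, add_assoc] at h
  exact (neg_add_eq_zero.mp (left_eq_add.mp h)).symm

theorem zero_eq_one : (0 : B) = 1 := by
  rw [← one_mul (0 : B)]
  exact mul_zero_eq_self 1

theorem mul_eq_add_lam (a b : B) : a * b = a + lam a b := by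
  rw [lam, add_neg_cancel_left]

theorem lam_add (a b c : B) : lam a (b + c) = lam a b + lam a c := by
  simp [lam, SkewBrace.mul_add_dist, sub_eq_add_neg, add_assoc]

theorem mul_neg_eq (a b : B) : a * -b = a + -(a * b) + a := by
  have h := SkewBrace.mul_add_dist a b (-b)
  rw [add_neg_cancel, mul_zero_eq_self, sub_eq_add_neg] at h
  rw [eq_neg_add_iff_add_eq.mpr h.symm, neg_add_rev, neg_neg]

theorem lam_mul (a b c : B) : lam (a * b) c = lam a (lam b c) := by
  calc lam (a * b) c = lam a (-b) + lam a (b * c) := by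
        simp [lam, mul_neg_eq, mul_assoc, add_assoc]
    _ = lam a (lam b c) := (lam_add a _ _).symm

theorem lam_one (c : B) : lam 1 c = c := by
  rw [lam, one_mul, ← zero_eq_one, neg_zero, zero_add]

theorem add_eq_mul_lam_inv (a b : B) : a + b = a * lam a⁻¹ b := by
  rw [mul_eq_add_lam, ← lam_mul, mul_inv_cancel, lam_one]

theorem inv_mul_eq_lam (a b : B) : a⁻¹ * b = lam a⁻¹ (-a + b) := by
  calc a⁻¹ * b = a⁻¹ * (a + (-a + b)) := by rw [add_neg_cancel_left]
    _ = lam a⁻¹ (-a + b) := by rw [add_eq_mul_lam_inv, inv_mul_cancel_left]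

@[to_additive]
theorem mul_eq_univ_iff {α : Type*} [Mul α] {s t : Set α} :
    s * t = univ ↔ ∀ b, ∃ x ∈ s, ∃ y ∈ t, b = x * y := by
  simp only [eq_univ_iff_forall, mem_mul, eq_comm]

namespace IsSubbrace

variable {S T U I : Set B}

theorem zero_mem (hS : IsSubbrace S) : (0 : B) ∈ S := by
  obtain ⟨⟨A, rfl⟩, -⟩ := hS
  exact A.zero_mem

theorem one_mem (hS : IsSubbrace S) : (1 : B) ∈ S :=
  zero_eq_one (B := B) ▸ hS.zero_mem

theorem add_mem (hS : IsSubbrace S) {x y : B} (hx : x ∈ S) (hy : y ∈ S) : x + y ∈ S := by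
  obtain ⟨⟨A, rfl⟩, -⟩ := hS
  exact A.add_mem hx hy

theorem neg_mem (hS : IsSubbrace S) {x : B} (hx : x ∈ S) : -x ∈ S := by
  obtain ⟨⟨A, rfl⟩, -⟩ := hS
  exact A.neg_mem hx

theorem mul_mem (hS : IsSubbrace S) {x y : B} (hx : x ∈ S) (hy : y ∈ S) : x * y ∈ S := by
  obtain ⟨-, M, rfl⟩ := hS
  exact M.mul_mem hx hy

theorem inv_mem (hS : IsSubbrace S) {x : B} (hx : x ∈ S) : x⁻¹ ∈ S := by
  obtain ⟨-, M, rfl⟩ := hS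
  exact M.inv_mem hx

theorem mem_of_neg_add_mem (hS : IsSubbrace S) {x y : B} (hx : x ∈ S) (h : -x + y ∈ S) :
    y ∈ S := by
  simpa using hS.add_mem hx h

theorem mem_of_inv_mul_mem (hS : IsSubbrace S) {x y : B} (hx : x ∈ S) (h : x⁻¹ * y ∈ S) :
    y ∈ S := by
  simpa using hS.mul_mem hx h

theorem inter (hS : IsSubbrace S) (hT : IsSubbrace T) : IsSubbrace (S ∩ T) := by
  obtain ⟨⟨A, rfl⟩, M, hM⟩ := hS
  obtain ⟨⟨A', rfl⟩, M', hM'⟩ := hT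
  exact ⟨⟨A ⊓ A', AddSubgroup.coe_inf _ _⟩, ⟨M ⊓ M', by rw [Subgroup.coe_inf, hM, hM']⟩⟩

theorem eq_of_subset_of_mul_eq_univ (hU : IsSubbrace U) (hT : IsSubbrace T) (hTU : T ⊆ U)
    (hIT : I * T = univ) (hIU : I ∩ U ⊆ T) : U = T := by
  refine Subset.antisymm (fun u hu => ?_) hTU
  obtain ⟨x, hx, t, ht, rfl⟩ : u ∈ I * T := hIT ▸ mem_univ u
  have hxU : x ∈ U := by simpa using hU.mul_mem hu (hU.inv_mem (hTU ht))
  exact hT.mul_mem (hIU ⟨hx, hxU⟩) ht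

end IsSubbrace

namespace IsIdeal

variable {I J S : Set B}

theorem isSubbrace (hI : IsIdeal I) : IsSubbrace I := by
  obtain ⟨⟨A, hA, -⟩, ⟨M, hM, -⟩, -⟩ := hI
  exact ⟨⟨A, hA⟩, ⟨M, hM⟩⟩

theorem add_conj_mem (hI : IsIdeal I) (g : B) {x : B} (hx : x ∈ I) : g + x + -g ∈ I := by
  obtain ⟨⟨A, rfl, hA⟩, -⟩ := hI
  exact hA.conj_mem x hx g

theorem mul_conj_mem (hI : IsIdeal I) (g : B) {x : B} (hx : x ∈ I) : g * x * g⁻¹ ∈ I := by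
  obtain ⟨-, ⟨M, rfl, hM⟩, -⟩ := hI
  exact hM.conj_mem x hx g

theorem lam_mem (hI : IsIdeal I) (g : B) {x : B} (hx : x ∈ I) : lam g x ∈ I :=
  hI.2.2 g x hx

theorem of_conj_mem (hS : IsSubbrace S) (hadd : ∀ g, ∀ x ∈ S, g + x + -g ∈ S)
    (hmul : ∀ g, ∀ x ∈ S, g * x * g⁻¹ ∈ S) (hlam : ∀ g, ∀ x ∈ S, lam g x ∈ S) :
    IsIdeal S := by
  obtain ⟨⟨A, rfl⟩, M, hM⟩ := hS
  refine ⟨⟨A, rfl, ⟨fun x hx g => hadd g x hx⟩⟩, ⟨M, hM, ⟨fun x hx g => ?_⟩⟩, hlam⟩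
  rw [← SetLike.mem_coe, hM] at hx ⊢
  exact hmul g x hx

theorem inv_mul_mem_of_neg_add_mem (hJ : IsIdeal J) {a b : B} (h : -a + b ∈ J) :
    a⁻¹ * b ∈ J := by
  rw [inv_mul_eq_lam]
  exact hJ.lam_mem _ h

theorem mul_eq_add (hI : IsIdeal I) (hS : IsSubbrace S) : I * S = I + S := by
  obtain ⟨⟨A, rfl, hA⟩, ⟨M, hM, hMn⟩, hlam⟩ := hI
  obtain ⟨⟨A', rfl⟩, M', hM'⟩ := hS
  calc (A : Set B) * A' = A' * A := by
        rw [← hM, ← hM', ← Subgroup.normal_mul, ← Subgroup.mul_normal, sup_comm]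
    _ = A' + A := by
        ext b
        constructor
        · rintro ⟨a, ha, y, hy, rfl⟩
          exact ⟨a, ha, lam a y, hlam a y hy, (mul_eq_add_lam a y).symm⟩
        · rintro ⟨a, ha, y, hy, rfl⟩
          exact ⟨a, ha, lam a⁻¹ y, hlam _ y hy, (add_eq_mul_lam_inv a y).symm⟩
    _ = A + A' := by rw [← AddSubgroup.add_normal, sup_comm, AddSubgroup.normal_add]

theorem isSubbrace_mul (hI : IsIdeal I) (hS : IsSubbrace S) : IsSubbrace (I * S) := by
  have hadd := hI.mul_eq_add hS
  obtain ⟨⟨A, hA, _⟩, ⟨M, hM, _⟩, -⟩ := hI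
  obtain ⟨⟨A', hA'⟩, M', hM'⟩ := hS
  exact ⟨⟨A ⊔ A', by rw [hadd, AddSubgroup.normal_add, hA, hA']⟩,
    ⟨M ⊔ M', by rw [Subgroup.normal_mul, hM, hM']⟩⟩

end IsIdeal

def IsAbelianFactor (I J : Set B) : Prop :=
  ∀ x ∈ I, ∀ y ∈ I, -(y + x) + (x + y) ∈ J ∧ -(x + y) + x * y ∈ J

namespace IsAbelianFactor

variable {I J W : Set B} {x y : B}

theorem neg_add_lam_mem (hab : IsAbelianFactor I J) (hx : x ∈ I) (hy : y ∈ I) :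
    -y + lam x y ∈ J := by
  rw [lam, ← add_assoc, ← neg_add_rev]
  exact (hab x hx y hy).2

theorem neg_add_add_conj_mem (hab : IsAbelianFactor I J) (hJ : IsIdeal J) (hx : x ∈ I)
    (hy : y ∈ I) : -y + (x + y + -x) ∈ J := by
  simpa [add_assoc] using hJ.add_conj_mem x (hab x hx y hy).1

theorem neg_mul_add_mul_mem (hab : IsAbelianFactor I J) (hJ : IsSubbrace J) (hx : x ∈ I)
    (hy : y ∈ I) : -(y * x) + x * y ∈ J := by
  have hyx : -(y * x) + (y + x) ∈ J := by simpa using hJ.neg_mem (hab y hy x hx).2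
  have e : -(y * x) + x * y =
      -(y * x) + (y + x) + (-(y + x) + (x + y) + (-(x + y) + x * y)) := by
    simp [add_assoc]
  rw [e]
  exact hJ.add_mem hyx (hJ.add_mem (hab x hx y hy).1 (hab x hx y hy).2)

theorem inv_mul_mul_conj_mem (hab : IsAbelianFactor I J) (hI : IsSubbrace I) (hJ : IsIdeal J)
    (hx : x ∈ I) (hy : y ∈ I) : y⁻¹ * (x * y * x⁻¹) ∈ J := by
  have h := hJ.inv_mul_mem_of_neg_add_mem (hab.neg_mul_add_mul_mem hJ.isSubbrace hy (hI.inv_mem hx))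
  simpa [mul_assoc] using h

theorem isIdeal_inter (hab : IsAbelianFactor I J) (hI : IsIdeal I) (hJ : IsIdeal J)
    (hJI : J ⊆ I) (hW : IsSubbrace W) (hJW : J ⊆ W) (hIW : I * W = univ) :
    IsIdeal (I ∩ W) := by
  have hK := hI.isSubbrace.inter hW
  have hJK : J ⊆ I ∩ W := subset_inter hJI hJW
  refine IsIdeal.of_conj_mem hK (fun g n hn => ?_) (fun g n hn => ?_) (fun g n hn => ?_)
  · obtain ⟨x, hx, t, ht, rfl⟩ : g ∈ I + W := hI.mul_eq_add hW ▸ hIW ▸ mem_univ g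
    have hm : t + n + -t ∈ I ∩ W :=
      ⟨hI.add_conj_mem t hn.1, hW.add_mem (hW.add_mem ht hn.2) (hW.neg_mem ht)⟩
    rw [show x + t + n + -(x + t) = x + (t + n + -t) + -x by simp [add_assoc]]
    exact hK.mem_of_neg_add_mem hm (hJK (hab.neg_add_add_conj_mem hJ hx hm.1))
  · obtain ⟨x, hx, t, ht, rfl⟩ : g ∈ I * W := hIW ▸ mem_univ g
    have hm : t * n * t⁻¹ ∈ I ∩ W :=
      ⟨hI.mul_conj_mem t hn.1, hW.mul_mem (hW.mul_mem ht hn.2) (hW.inv_mem ht)⟩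
    rw [show x * t * n * (x * t)⁻¹ = x * (t * n * t⁻¹) * x⁻¹ by group]
    exact hK.mem_of_inv_mul_mem hm (hJK (hab.inv_mul_mul_conj_mem hI.isSubbrace hJ hx hm.1))
  · obtain ⟨x, hx, t, ht, rfl⟩ : g ∈ I * W := hIW ▸ mem_univ g
    have hm : lam t n ∈ I ∩ W :=
      ⟨hI.lam_mem t hn.1, hW.add_mem (hW.neg_mem ht) (hW.mul_mem ht hn.2)⟩
    rw [lam_mul]
    exact hK.mem_of_neg_add_mem hm (hJK (hab.neg_add_lam_mem hx hm.1))

end IsAbelianFactor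

variable {I J : Set B}

theorem inter_eq_or_subset_of_mul_eq_univ (hI : IsIdeal I) (hJ : IsIdeal J) (hJI : J ⊆ I)
    (hchief : ∀ K : Set B, IsIdeal K → J ⊆ K → K ⊆ I → K = J ∨ K = I)
    (hab : IsAbelianFactor I J) {W : Set B} (hW : IsSubbrace W) (hJW : J ⊆ W)
    (hIW : I * W = univ) : I ∩ W = J ∨ I ⊆ W :=
  (hchief _ (hab.isIdeal_inter hI hJ hJI hW hJW hIW) (subset_inter hJI hJW)
    inter_subset_left).imp id inter_eq_left.mp

/-- `T / J` is a complement of `I / J` in `B / J`, subbraces of `B / J` being read as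
subbraces of `B` containing `J`. -/
def IsComplementMod (I J T : Set B) : Prop :=
  IsSubbrace T ∧ J ⊆ T ∧ (∀ b : B, ∃ x ∈ I, ∃ t ∈ T, b = x * t) ∧
    (∀ b : B, ∃ x ∈ I, ∃ t ∈ T, b = x + t) ∧ I ∩ T = J

theorem isComplementMod_of_isMaximalSubbrace (hI : IsIdeal I) (hJ : IsIdeal J) (hJI : J ⊆ I)
    (hchief : ∀ K : Set B, IsIdeal K → J ⊆ K → K ⊆ I → K = J ∨ K = I)
    (hab : IsAbelianFactor I J) {S : Set B} (hS : IsMaximalSubbrace S) (hJS : J ⊆ S)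
    (hIS : ¬I ⊆ S) : IsComplementMod I J S := by
  have hSIS : S ⊆ I * S := fun t ht => ⟨1, hI.isSubbrace.one_mem, t, ht, one_mul t⟩
  have hIS_univ : I * S = univ := by
    refine (hS.2.2 _ (hI.isSubbrace_mul hS.1) hSIS).resolve_left fun h => hIS fun x hx => ?_
    exact h ▸ ⟨x, hx, 1, hS.1.one_mem, mul_one x⟩
  have hinter := (inter_eq_or_subset_of_mul_eq_univ hI hJ hJI hchief hab hS.1 hJS
    hIS_univ).resolve_right hIS
  exact ⟨hS.1, hJS, mul_eq_univ_iff.mp hIS_univ,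
    add_eq_univ_iff.mp (hI.mul_eq_add hS.1 ▸ hIS_univ), hinter⟩

theorem IsComplementMod.isMaximalSubbrace (hI : IsIdeal I) (hJ : IsIdeal J) (hJI : J ⊆ I)
    (hne : J ≠ I) (hchief : ∀ K : Set B, IsIdeal K → J ⊆ K → K ⊆ I → K = J ∨ K = I)
    (hab : IsAbelianFactor I J) {T : Set B} (hT : IsComplementMod I J T) :
    IsMaximalSubbrace T := by
  obtain ⟨hTsub, hJT, hmul, -, hIT⟩ := hT
  have hIT_univ : I * T = univ := mul_eq_univ_iff.mpr hmul
  refine ⟨hTsub, fun h => hne ?_, fun U hU hTU => ?_⟩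
  · rw [← hIT, h, inter_univ]
  have hIU : I * U = univ := univ_subset_iff.mp (hIT_univ ▸ mul_subset_mul_left hTU)
  rcases inter_eq_or_subset_of_mul_eq_univ hI hJ hJI hchief hab hU (hJT.trans hTU) hIU
    with h | h
  · exact Or.inl (hU.eq_of_subset_of_mul_eq_univ hTsub hTU hIT_univ (h.trans_subset hJT))
  · exact Or.inr (univ_subset_iff.mp
      (hIU ▸ mul_subset_iff.mpr fun x hx y hy => hU.mul_mem (h hx) hy))

end SkewBraceDefs

/-- An abelian chief factor `I/J` of a skew brace `B` is either a Frattini chief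
factor (`I/J ⊆ Φ(B/J)`) or a complemented chief factor; if `B` is finite, every
complement of `I/J` is a maximal subbrace of `B/J`. (Subbraces of `B/J` correspond
to subbraces of `B` containing `J`.) -/
theorem statement17 (B : Type*) [SkewBrace B] (I J : Set B)
    (hI : IsIdeal I) (hJ : IsIdeal J) (hJI : J ⊆ I)
    (hne : J ≠ I)
    (hchief : ∀ K : Set B, IsIdeal K → J ⊆ K → K ⊆ I → K = J ∨ K = I)
    (hab : ∀ x ∈ I, ∀ y ∈ I, -(y + x) + (x + y) ∈ J ∧ -(x + y) + x * y ∈ J) :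
    ((∀ S : Set B, IsMaximalSubbrace S → J ⊆ S → I ⊆ S) ∨
      ∃ T : Set B, IsSubbrace T ∧ J ⊆ T ∧
        (∀ b : B, ∃ x ∈ I, ∃ t ∈ T, b = x * t) ∧
        (∀ b : B, ∃ x ∈ I, ∃ t ∈ T, b = x + t) ∧ I ∩ T = J) ∧
    (Finite B → ∀ T : Set B,
      (IsSubbrace T ∧ J ⊆ T ∧
        (∀ b : B, ∃ x ∈ I, ∃ t ∈ T, b = x * t) ∧
        (∀ b : B, ∃ x ∈ I, ∃ t ∈ T, b = x + t) ∧ I ∩ T = J) →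
      IsMaximalSubbrace T) := by
  refine ⟨or_iff_not_imp_left.mpr fun hΦ => ?_,
    fun _ T hT => IsComplementMod.isMaximalSubbrace hI hJ hJI hne hchief hab hT⟩
  push Not at hΦ
  obtain ⟨S, hS, hJS, hIS⟩ := hΦ
  exact ⟨S, isComplementMod_of_isMaximalSubbrace hI hJ hJI hchief hab hS hJS hIS⟩
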